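/- arXiv:1412.4035 — 8 statements merged into one kernel-verified Lean document; each statement's English description precedes it below -/
import Mathlib

section
/- For all x, y in the unit ball B^n, sinh(ρ(x,y)/2) ≤ c(x,y), where ρ is the hyperbolic metric of B^n and c is the Cassinian metric of B^n. -/
open Metric Set

abbrev E (n : ℕ) := EuclideanSpace ℝ (Fin n)

/-- The Cassinian metric of a domain `D`: `c_D(x,y) = sup_{p ∈ ∂D} |x-y|/(|x-p||p-y|)`. -/
noncomputable def cassinian {n : ℕ} (D : Set (E n)) (x y : E n) : ℝ :=
  ⨆ p : frontier D, dist x y / (dist x (p : E n) * dist (p : E n) y)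

/-- The hyperbolic metric of the unit ball, characterized by
`sinh(ρ(x,y)/2) = |x-y|/√((1-|x|²)(1-|y|²))`. -/
noncomputable def rhoBall {n : ℕ} (x y : E n) : ℝ :=
  2 * Real.arsinh (dist x y / Real.sqrt ((1 - ‖x‖ ^ 2) * (1 - ‖y‖ ^ 2)))

/-!
Assume `‖y‖ ≤ ‖x‖` and take the boundary point `p = x / ‖x‖` (any unit vector if `x = 0`).
Then `‖x - p‖ = 1 - ‖x‖` and `‖p - y‖ ≤ 1 + ‖y‖`, and
`(1 - ‖x‖)(1 + ‖y‖) ≤ √((1 - ‖x‖²)(1 - ‖y‖²))` because `‖y‖ ≤ ‖x‖`;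
so the term of the Cassinian supremum at `p` alone dominates `sinh (ρ / 2)`.
-/

lemma one_sub_norm_le_dist_of_norm_eq_one {F : Type*} [NormedAddCommGroup F] {x p : F}
    (hp : ‖p‖ = 1) : 1 - ‖x‖ ≤ dist x p := by
  rw [dist_comm, dist_eq_norm, ← hp]
  exact norm_sub_norm_le p x

lemma exists_norm_eq_one_dist_eq {F : Type*} [NormedAddCommGroup F] [NormedSpace ℝ F]
    [Nontrivial F] {x : F} (hx : ‖x‖ ≤ 1) :
    ∃ p : F, ‖p‖ = 1 ∧ dist x p = 1 - ‖x‖ := by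
  rcases eq_or_ne x 0 with rfl | hx0
  · obtain ⟨p, hp⟩ := exists_norm_eq F zero_le_one
    exact ⟨p, hp, by rw [dist_zero_left, hp, norm_zero, sub_zero]⟩
  · have hxn : ‖x‖ ≠ 0 := norm_ne_zero_iff.mpr hx0
    refine ⟨‖x‖⁻¹ • x, by rw [norm_smul, norm_inv, norm_norm, inv_mul_cancel₀ hxn], ?_⟩
    have hx1 : 1 - ‖x‖⁻¹ ≤ 0 := by
      rw [sub_nonpos]; exact one_le_inv₀ (norm_pos_iff.mpr hx0) |>.mpr hx
    have hsub : x - ‖x‖⁻¹ • x = (1 - ‖x‖⁻¹) • x := by rw [sub_smul, one_smul]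
    rw [dist_eq_norm, hsub, norm_smul,
      Real.norm_eq_abs, abs_of_nonpos hx1, neg_sub, sub_mul, inv_mul_cancel₀ hxn, one_mul]

lemma one_sub_mul_one_add_le_sqrt {a b : ℝ} (hb : 0 ≤ b) (hba : b ≤ a) (ha : a < 1) :
    (1 - a) * (1 + b) ≤ √((1 - a ^ 2) * (1 - b ^ 2)) := by
  apply Real.le_sqrt_of_sq_le
  have h : 0 ≤ (1 - a) * (1 + b) * (a - b) := by
    apply mul_nonneg (mul_nonneg _ _) _ <;> linarith
  nlinarith

lemma sinh_rhoBall_div_two {n : ℕ} (x y : E n) :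
    Real.sinh (rhoBall x y / 2) = dist x y / √((1 - ‖x‖ ^ 2) * (1 - ‖y‖ ^ 2)) := by
  rw [rhoBall, mul_div_cancel_left₀ _ two_ne_zero, Real.sinh_arsinh]

lemma cassinian_comm {n : ℕ} (D : Set (E n)) (x y : E n) :
    cassinian D x y = cassinian D y x := by
  simp only [cassinian, dist_comm x, dist_comm _ y, mul_comm]

lemma cassinian_nonneg {n : ℕ} (D : Set (E n)) (x y : E n) : 0 ≤ cassinian D x y :=
  Real.iSup_nonneg fun _ => by positivity

lemma bddAbove_cassinian_ball {n : ℕ} {x y : E n} (hx : ‖x‖ < 1) (hy : ‖y‖ < 1) :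
    BddAbove (range fun p : frontier (ball (0 : E n) 1) =>
      dist x y / (dist x (p : E n) * dist (p : E n) y)) := by
  refine ⟨dist x y / ((1 - ‖x‖) * (1 - ‖y‖)), ?_⟩
  rintro _ ⟨⟨p, hp⟩, rfl⟩
  have hp1 : ‖p‖ = 1 := mem_sphere_zero_iff_norm.mp (frontier_ball_subset_sphere hp)
  have hdx := one_sub_norm_le_dist_of_norm_eq_one (x := x) hp1
  have hdy := one_sub_norm_le_dist_of_norm_eq_one (x := y) hp1
  rw [dist_comm y] at hdy
  exact div_le_div_of_nonneg_left dist_nonneg 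
    (mul_pos (by linarith) (by linarith)) (by gcongr)

lemma dist_div_sqrt_le_cassinian_ball {n : ℕ} [Nontrivial (E n)] {x y : E n}
    (hx : ‖x‖ < 1) (hy : ‖y‖ < 1) (hyx : ‖y‖ ≤ ‖x‖) :
    dist x y / √((1 - ‖x‖ ^ 2) * (1 - ‖y‖ ^ 2)) ≤ cassinian (ball (0 : E n) 1) x y := by
  obtain ⟨p, hp1, hdx⟩ := exists_norm_eq_one_dist_eq hx.le
  have hdy : dist p y ≤ 1 + ‖y‖ := hp1 ▸ dist_le_norm_add_norm p y
  have hdy_pos : 0 < dist p y := by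
    linarith [one_sub_norm_le_dist_of_norm_eq_one (x := y) hp1, dist_comm y p]
  have hp : p ∈ frontier (ball (0 : E n) 1) := by
    rw [frontier_ball 0 one_ne_zero, mem_sphere_zero_iff_norm]; exact hp1
  calc dist x y / √((1 - ‖x‖ ^ 2) * (1 - ‖y‖ ^ 2))
      ≤ dist x y / (dist x p * dist p y) := by
        refine div_le_div_of_nonneg_left dist_nonneg
          (mul_pos (by rw [hdx]; linarith) hdy_pos) ?_
        calc dist x p * dist p y ≤ (1 - ‖x‖) * (1 + ‖y‖) := by
              rw [hdx]; exact mul_le_mul_of_nonneg_left hdy (by linarith)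
          _ ≤ √((1 - ‖x‖ ^ 2) * (1 - ‖y‖ ^ 2)) :=
              one_sub_mul_one_add_le_sqrt (norm_nonneg y) hyx hx
    _ ≤ cassinian (ball (0 : E n) 1) x y := le_ciSup (bddAbove_cassinian_ball hx hy) ⟨p, hp⟩

theorem sinh_rho_le_cassinian_general (n : ℕ) (x y : E n)
    (hx : x ∈ ball (0 : E n) 1) (hy : y ∈ ball (0 : E n) 1) :
    Real.sinh (rhoBall x y / 2) ≤ cassinian (ball (0 : E n) 1) x y := by
  rw [mem_ball_zero_iff] at hx hy
  rw [sinh_rhoBall_div_two]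
  rcases eq_or_ne x y with rfl | hne
  · rw [dist_self, zero_div]
    exact cassinian_nonneg _ x x
  have : Nontrivial (E n) := nontrivial_of_ne x y hne
  rcases le_total ‖y‖ ‖x‖ with hyx | hxy
  · exact dist_div_sqrt_le_cassinian_ball hx hy hyx
  · rw [cassinian_comm, dist_comm, mul_comm]
    exact dist_div_sqrt_le_cassinian_ball hy hx hxy

theorem sinh_rho_le_cassinian (n : ℕ) (hn : 2 ≤ n) (x y : E n)
    (hx : x ∈ ball (0 : E n) 1) (hy : y ∈ ball (0 : E n) 1) :
    Real.sinh (rhoBall x y / 2) ≤ cassinian (ball (0 : E n) 1) x y :=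
  sinh_rho_le_cassinian_general n x y hx hy
end

section
/- For any proper subdomain D of R^n and x, y ∈ D, j_D(x,y) ≤ (|x-y| + min(δ_D(x), δ_D(y))) · c_D(x,y). -/
open Metric Set

/-- The distance ratio metric of a domain . -/
noncomputable def jdist {n : ℕ} (D : Set (E n)) (x y : E n) : ℝ :=
  Real.log (1 + dist x y / min (infDist x (frontier D)) (infDist y (frontier D)))

/-!
Write `m = min (δ x) (δ y)` and `d = |x - y|`. Since `log (1 + t) ≤ t`, it suffices to show
`d / m ≤ (d + m) c(x, y)`, i.e. to find a boundary point `p` with `|x - p| |p - y| ≤ m (d + m)`.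
A boundary point nearest to whichever of `x`, `y` realises `m` does it: its distance to that point
is `m`, and by the triangle inequality its distance to the other one is at most `d + m`.
-/

namespace Metric

variable {α : Type*} [MetricSpace α] {K : Set α} {x y : α}

theorem bddAbove_range_dist_div_dist_mul_dist (hx : 0 < infDist x K) (hy : 0 < infDist y K) :
    BddAbove (range fun p : K => dist x y / (dist x (p : α) * dist (p : α) y)) := by
  refine ⟨dist x y / (infDist x K * infDist y K), ?_⟩
  rintro _ ⟨p, rfl⟩
  have hxp : infDist x K ≤ dist x p := infDist_le_dist_of_mem p.2
  have hpy : infDist y K ≤ dist (p : α) y := dist_comm y p ▸ infDist_le_dist_of_mem p.2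
  exact div_le_div_of_nonneg_left dist_nonneg (mul_pos hx hy) (mul_le_mul hxp hpy hy.le dist_nonneg)

theorem exists_mem_dist_mul_dist_le [ProperSpace α] (hK : IsClosed K) (hne : K.Nonempty) (x y : α) :
    ∃ p ∈ K, dist x p * dist p y ≤
      min (infDist x K) (infDist y K) * (dist x y + min (infDist x K) (infDist y K)) := by
  wlog hxy : infDist x K ≤ infDist y K generalizing x y
  · obtain ⟨p, hp, h⟩ := this y x (le_of_not_ge hxy)
    exact ⟨p, hp, by rwa [dist_comm x p, dist_comm p y, mul_comm, min_comm, dist_comm x y]⟩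
  obtain ⟨p, hp, hxp⟩ := hK.exists_infDist_eq_dist hne x
  have hpy : dist p y ≤ dist x y + infDist x K := by
    linarith [dist_triangle p x y, dist_comm p x]
  refine ⟨p, hp, ?_⟩
  rw [min_eq_left hxy, ← hxp]
  exact mul_le_mul_of_nonneg_left hpy infDist_nonneg

theorem log_one_add_div_le_mul_iSup [ProperSpace α] (hK : IsClosed K)
    (hx : 0 < infDist x K) (hy : 0 < infDist y K) :
    Real.log (1 + dist x y / min (infDist x K) (infDist y K)) ≤
      (dist x y + min (infDist x K) (infDist y K)) *
        ⨆ p : K, dist x y / (dist x (p : α) * dist (p : α) y) := by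
  set d := dist x y
  set m := min (infDist x K) (infDist y K)
  have hm : 0 < m := lt_min hx hy
  have hdm : d + m ≠ 0 := by positivity
  have hne : K.Nonempty := nonempty_iff_ne_empty.2 fun h => by simp [h] at hx
  obtain ⟨p, hp, hprod⟩ := exists_mem_dist_mul_dist_le hK hne x y
  have hprod_pos : 0 < dist x p * dist p y :=
    mul_pos (hx.trans_le (infDist_le_dist_of_mem hp))
      (hy.trans_le (dist_comm y p ▸ infDist_le_dist_of_mem hp))
  have hsup : d / (m * (d + m)) ≤ ⨆ q : K, d / (dist x (q : α) * dist (q : α) y) :=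
    (div_le_div_of_nonneg_left dist_nonneg hprod_pos hprod).trans
      (le_ciSup (bddAbove_range_dist_div_dist_mul_dist hx hy) ⟨p, hp⟩)
  calc Real.log (1 + d / m) ≤ d / m := by
        linarith [Real.log_le_sub_one_of_pos (by positivity : 0 < 1 + d / m)]
    _ = (d + m) * (d / (m * (d + m))) := by field_simp
    _ ≤ _ := mul_le_mul_of_nonneg_left hsup (by positivity)

end Metric

theorem jdist_le_cassinian_general (n : ℕ) (D : Set (E n)) (hD : IsOpen D)
    (hDp : D ≠ univ) (x y : E n) (hx : x ∈ D) (hy : y ∈ D) :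
    jdist D x y ≤
      (dist x y + min (infDist x (frontier D)) (infDist y (frontier D))) * cassinian D x y := by
  have hne : (frontier D).Nonempty := nonempty_frontier_iff.2 ⟨⟨x, hx⟩, hDp⟩
  have hδ : ∀ z ∈ D, 0 < infDist z (frontier D) := fun z hz =>
    (isClosed_frontier.notMem_iff_infDist_pos hne).1 fun hzK =>
      (hD.inter_frontier_eq.subset ⟨hz, hzK⟩ : z ∈ (∅ : Set (E n)))
  exact log_one_add_div_le_mul_iSup isClosed_frontier (hδ x hx) (hδ y hy)

theorem jdist_le_cassinian (n : ℕ) (hn : 2 ≤ n) (D : Set (E n)) (hD : IsOpen D)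
    (hDc : IsConnected D) (hDp : D ≠ univ) (x y : E n) (hx : x ∈ D) (hy : y ∈ D) :
    jdist D x y ≤
      (dist x y + min (infDist x (frontier D)) (infDist y (frontier D))) * cassinian D x y :=
  jdist_le_cassinian_general n D hD hDp x y hx hy
end

section
/- If D ⊊ R^n is a bounded domain, then for all x, y ∈ D, p_D(x,y) ≤ (diam(D)/√2) · c_D(x,y). -/
open Metric Set

/-- The quantity p_D. -/
noncomputable def pdist {n : ℕ} (D : Set (E n)) (x y : E n) : ℝ :=
  dist x y / Real.sqrt (dist x y ^ 2 + 4 * infDist x (frontier D) * infDist y (frontier D))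

/-!
Assume `x` is the point closer to `∂D` and let `p ∈ ∂D` realise `δ_D(x) = |x - p|`.
Since `δ_D(x) ≤ δ_D(y)`, the denominator of `p_D(x, y)` is at least `2 |x - p|`, while the
single boundary point `p` already gives `c_D(x, y) ≥ |x - y| / (|x - p| |p - y|)` with
`|p - y| ≤ diam D`. Comparing the two bounds costs only `√2 ≤ 2`.
-/

section

variable {n : ℕ}

lemma pdist_symm (D : Set (E n)) (x y : E n) : pdist D x y = pdist D y x := by
  rw [pdist, pdist, dist_comm y x, mul_assoc, mul_assoc, mul_comm (infDist y _)]

lemma cassinian_symm (D : Set (E n)) (x y : E n) : cassinian D x y = cassinian D y x := by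
  simp only [cassinian, dist_comm y x, dist_comm y, dist_comm _ x, mul_comm]

lemma pdist_le_div_two_infDist (D : Set (E n)) {x y : E n} (hx : 0 < infDist x (frontier D))
    (hle : infDist x (frontier D) ≤ infDist y (frontier D)) :
    pdist D x y ≤ dist x y / (2 * infDist x (frontier D)) := by
  refine div_le_div_of_nonneg_left dist_nonneg (by positivity)
    ((Real.le_sqrt' (by positivity)).2 ?_)
  nlinarith [sq_nonneg (dist x y)]

lemma div_dist_mul_dist_le_cassinian {D : Set (E n)} {x y p : E n} (hx : x ∉ frontier D)
    (hy : y ∉ frontier D) (hp : p ∈ frontier D) :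
    dist x y / (dist x p * dist p y) ≤ cassinian D x y := by
  have hδx := (isClosed_frontier.notMem_iff_infDist_pos ⟨p, hp⟩).1 hx
  have hδy := (isClosed_frontier.notMem_iff_infDist_pos ⟨p, hp⟩).1 hy
  refine le_ciSup (f := fun q : frontier D => dist x y / (dist x q * dist (q : E n) y))
    ⟨dist x y / (infDist x (frontier D) * infDist y (frontier D)), ?_⟩ ⟨p, hp⟩
  rintro _ ⟨q, rfl⟩
  exact div_le_div_of_nonneg_left dist_nonneg (by positivity) <|
    mul_le_mul (infDist_le_dist_of_mem q.2) (dist_comm y q ▸ infDist_le_dist_of_mem q.2)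
      hδy.le dist_nonneg

end

theorem pdist_le_diam_cassinian_general (n : ℕ) (D : Set (E n)) (hD : IsOpen D)
    (hDp : D ≠ univ) (hDb : Bornology.IsBounded D)
    (x y : E n) (hx : x ∈ D) (hy : y ∈ D) :
    pdist D x y ≤ (Metric.diam D / Real.sqrt 2) * cassinian D x y := by
  have hF : (frontier D).Nonempty := nonempty_frontier_iff.2 ⟨⟨x, hx⟩, hDp⟩
  have hD_frontier : ∀ {z}, z ∈ D → z ∉ frontier D := fun hz hzF =>
    (disjoint_frontier_iff_isOpen.2 hD).ne_of_mem hzF hz rfl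
  wlog hle : infDist x (frontier D) ≤ infDist y (frontier D) generalizing x y
  · simpa only [pdist_symm, cassinian_symm] using this y x hy hx (le_of_not_ge hle)
  obtain ⟨p, hpF, hxp⟩ := isClosed_frontier.exists_infDist_eq_dist hF x
  have hδx : 0 < infDist x (frontier D) :=
    (isClosed_frontier.notMem_iff_infDist_pos hF).1 (hD_frontier hx)
  have hxp_pos : 0 < dist x p := hxp ▸ hδx
  have hpy_pos : 0 < dist p y := dist_pos.2 fun h => hD_frontier hy (h ▸ hpF)
  have hpy_le : dist p y ≤ diam D := by
    simpa only [diam_closure] using dist_le_diam_of_mem hDb.closure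
      (frontier_subset_closure hpF) (subset_closure hy)
  have hsqrt2 : Real.sqrt 2 ≤ 2 := Real.sqrt_le_left zero_le_two |>.2 (by norm_num)
  calc pdist D x y ≤ dist x y / (2 * dist x p) := hxp ▸ pdist_le_div_two_infDist D hδx hle
    _ ≤ dist x y / (Real.sqrt 2 * dist x p) := by gcongr
    _ = dist p y / Real.sqrt 2 * (dist x y / (dist x p * dist p y)) := by field_simp
    _ ≤ diam D / Real.sqrt 2 * cassinian D x y := by
        gcongr
        exact div_dist_mul_dist_le_cassinian (hD_frontier hx) (hD_frontier hy) hpF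

theorem pdist_le_diam_cassinian (n : ℕ) (hn : 2 ≤ n) (D : Set (E n)) (hD : IsOpen D)
    (hDc : IsConnected D) (hDp : D ≠ univ) (hDb : Bornology.IsBounded D)
    (x y : E n) (hx : x ∈ D) (hy : y ∈ D) :
    pdist D x y ≤ (Metric.diam D / Real.sqrt 2) * cassinian D x y :=
  pdist_le_diam_cassinian_general n D hD hDp hDb x y hx hy
end

section
/- Let φ be a Möbius transformation with φ(B^n) = B^n and a = φ(0). Then for all x, y ∈ B^n, ((1-|a|)/(1+|a|))·c(x,y) ≤ c(φ(x), φ(y)) ≤ ((1+|a|)/(1-|a|))·c(x,y), where c is the Cassinian metric of B^n. -/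
/-
The Möbius map is `T` or `ι ∘ T` with `T` orthogonal and `ι` the inversion in a sphere `S(c, R)`
orthogonal to the unit sphere, i.e. `R² = ‖c‖² - 1`. The Cassinian metric of the ball is a supremum
over the unit sphere, which `T` and `ι` both permute, and `T` preserves every Cassinian quotient
`|x - y| / (|x - p| |p - y|)`. Since `|ι u - ι v| = R² |u - v| / (|u - c| |v - c|)`, the inversion
multiplies the quotient at `p` by `|p - c|² / R²`, which for `‖p‖ = 1` lies between
`(‖c‖ - 1)/(‖c‖ + 1)` and its inverse; finally `‖ι 0‖ = 1/‖c‖`.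
-/

open Metric Set

/-- A Moebius transformation of the unit ball: either an orthogonal map, or the
composition of an orthogonal map followed by the inversion in the sphere
S(a*, r) orthogonal to the unit sphere, where a* = a/|a|^2 and r = sqrt(1-|a|^2)/|a|. -/
def IsMobiusOfBall {n : ℕ} (f : E n → E n) : Prop :=
  ∃ T : E n ≃ₗᵢ[ℝ] E n,
    (∀ x, f x = T x) ∨
      ∃ a : E n, a ≠ 0 ∧ ‖a‖ < 1 ∧ ∀ x, f x =
        EuclideanGeometry.inversion ((‖a‖ ^ 2)⁻¹ • a) (Real.sqrt (1 - ‖a‖ ^ 2) / ‖a‖) (T x)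

open EuclideanGeometry

theorem mul_iSup_le_iSup_mul_and_le {ι : Type*} {g w : ι → ℝ} {L U : ℝ} (hg₀ : ∀ i, 0 ≤ g i)
    (hg : BddAbove (range g)) (hL : 0 ≤ L) (hw : ∀ i, w i ∈ Icc L U) :
    L * ⨆ i, g i ≤ ⨆ i, w i * g i ∧ ⨆ i, w i * g i ≤ U * ⨆ i, g i := by
  rcases isEmpty_or_nonempty ι with _ | _
  · simp [Real.iSup_of_isEmpty]
  have hU : 0 ≤ U := hL.trans ((hw (Classical.arbitrary ι)).1.trans (hw _).2)
  have hle : ∀ i, w i * g i ≤ U * ⨆ j, g j := fun i =>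
    mul_le_mul (hw i).2 (le_ciSup hg i) (hg₀ i) hU
  refine ⟨?_, ciSup_le hle⟩
  rw [Real.mul_iSup_of_nonneg hL]
  exact ciSup_mono ⟨_, forall_mem_range.2 hle⟩ fun i =>
    mul_le_mul_of_nonneg_right (hw i).1 (hg₀ i)

noncomputable def cassinianQuotient {α : Type*} [PseudoMetricSpace α] (x y p : α) : ℝ :=
  dist x y / (dist x p * dist p y)

theorem cassinianQuotient_nonneg {α : Type*} [PseudoMetricSpace α] (x y p : α) :
    0 ≤ cassinianQuotient x y p := by
  unfold cassinianQuotient; positivity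

section UnitSphere

variable {V : Type*} [SeminormedAddCommGroup V]

theorem one_sub_norm_le_dist {x p : V} (hp : ‖p‖ = 1) : 1 - ‖x‖ ≤ dist x p := by
  simpa [hp, dist_eq_norm'] using norm_sub_norm_le p x

theorem cassinianQuotient_le {x y p : V} (hx : ‖x‖ < 1) (hy : ‖y‖ < 1) (hp : ‖p‖ = 1) :
    cassinianQuotient x y p ≤ dist x y / ((1 - ‖x‖) * (1 - ‖y‖)) := by
  have hxp := one_sub_norm_le_dist (x := x) hp
  have hyp := one_sub_norm_le_dist (x := y) hp
  rw [dist_comm] at hyp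
  exact div_le_div_of_nonneg_left dist_nonneg (by nlinarith) (by gcongr)

theorem dist_sq_div_sq_mem_Icc {c p : V} {R : ℝ} (hc : 1 < ‖c‖) (hR : R ^ 2 = ‖c‖ ^ 2 - 1)
    (hp : ‖p‖ = 1) :
    dist p c ^ 2 / R ^ 2 ∈ Icc ((‖c‖ - 1) / (‖c‖ + 1)) ((‖c‖ + 1) / (‖c‖ - 1)) := by
  have hlo : ‖c‖ - 1 ≤ dist p c := by simpa [hp, dist_eq_norm'] using norm_sub_norm_le c p
  have hhi : dist p c ≤ ‖c‖ + 1 := by simpa [hp, dist_eq_norm, add_comm] using norm_sub_le p c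
  have hR' : R ^ 2 = (‖c‖ - 1) * (‖c‖ + 1) := by rw [hR]; ring
  have h1 : 0 < ‖c‖ - 1 := by linarith
  rw [hR']
  constructor
  · rw [div_le_div_iff₀ (by linarith) (by positivity)]
    nlinarith [mul_le_mul hlo hlo h1.le (by linarith)]
  · rw [div_le_div_iff₀ (by positivity) h1]
    nlinarith [mul_le_mul hhi hhi dist_nonneg (by linarith)]

end UnitSphere

section Inversion

variable {V P : Type*} [NormedAddCommGroup V] [InnerProductSpace ℝ V]

theorem cassinianQuotient_inversion [MetricSpace P] [NormedAddTorsor V P] {c x y p : P} {R : ℝ}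
    (hR : R ≠ 0) (hx : x ≠ c) (hy : y ≠ c) (hp : p ≠ c) :
    cassinianQuotient (inversion c R x) (inversion c R y) (inversion c R p) =
      dist p c ^ 2 / R ^ 2 * cassinianQuotient x y p := by
  have hxc := dist_pos.2 hx
  have hyc := dist_pos.2 hy
  have hpc := dist_pos.2 hp
  unfold cassinianQuotient
  rw [dist_inversion_inversion hx hy, dist_inversion_inversion hx hp,
    dist_inversion_inversion hp hy]
  rcases eq_or_ne (dist x p * dist p y) 0 with h | h
  · rcases mul_eq_zero.1 h with h | h <;> simp [h]
  · field_simp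

theorem norm_inversion_of_norm_eq_one {c p : V} {R : ℝ} (hR : R ^ 2 = ‖c‖ ^ 2 - 1)
    (hp : ‖p‖ = 1) : ‖inversion c R p‖ = 1 := by
  rcases eq_or_ne p c with rfl | hpc
  · rwa [inversion_self]
  have hd : 0 < ‖p - c‖ := norm_pos_iff.2 (sub_ne_zero.2 hpc)
  have hinner : 2 * inner ℝ c (p - c) = -R ^ 2 - ‖p - c‖ ^ 2 := by
    rw [inner_sub_right, real_inner_self_eq_norm_sq, real_inner_comm, norm_sub_sq_real, hp, hR]
    ring
  rw [← sq_eq_sq₀ (norm_nonneg _) zero_le_one, inversion, dist_eq_norm, vsub_eq_sub, vadd_eq_add,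
    add_comm, norm_add_sq_real, norm_smul, inner_smul_right, mul_pow, Real.norm_eq_abs, sq_abs]
  field_simp
  linear_combination R ^ 2 * hinner - ‖p - c‖ ^ 2 * hR

theorem norm_inversion_zero {c : V} {R : ℝ} (hR : R ^ 2 = ‖c‖ ^ 2 - 1) :
    ‖inversion c R 0‖ = ‖c‖⁻¹ := by
  have hc : ‖c‖ ≠ 0 := by
    intro h; rw [h] at hR; nlinarith
  have : inversion c R 0 = (‖c‖ ^ 2)⁻¹ • c := by
    rw [inversion, dist_zero_left, vsub_eq_sub, vadd_eq_add, zero_sub, smul_neg, neg_add_eq_sub]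
    nth_rewrite 1 [← one_smul ℝ c]
    rw [← sub_smul, div_pow, hR]
    congr 1
    field_simp
    ring
  rw [this, norm_smul, norm_inv, norm_pow, norm_norm]
  field_simp

theorem norm_inv_norm_sq_smul (a : V) : ‖(‖a‖ ^ 2)⁻¹ • a‖ = ‖a‖⁻¹ := by
  rw [norm_smul, norm_inv, norm_pow, norm_norm, sq, mul_inv, mul_assoc]
  rcases eq_or_ne ‖a‖ 0 with h | h
  · simp [h]
  · rw [inv_mul_cancel₀ h, mul_one]

end Inversion

section Cassinian

variable {n : ℕ}

theorem cassinian_image_isometryEquiv (e : E n ≃ᵢ E n) (D : Set (E n)) (x y : E n) :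
    cassinian (e '' D) (e x) (e y) = cassinian D x y := by
  have h : frontier (e '' D) = e '' frontier D := (e.toHomeomorph.image_frontier D).symm
  unfold cassinian
  rw [h, ← (Equiv.Set.image e (frontier D) e.injective).iSup_comp]
  simp only [Equiv.Set.image_apply, e.dist_eq]

theorem cassinian_ball_linearIsometryEquiv (T : E n ≃ₗᵢ[ℝ] E n) (x y : E n) :
    cassinian (ball (0 : E n) 1) (T x) (T y) = cassinian (ball (0 : E n) 1) x y := by
  have h := cassinian_image_isometryEquiv T.toIsometryEquiv (ball 0 1) x y
  rwa [IsometryEquiv.image_ball, LinearIsometryEquiv.coe_toIsometryEquiv, map_zero] at h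

theorem cassinian_ball_eq_iSup_sphere (x y : E n) :
    cassinian (ball (0 : E n) 1) x y = ⨆ p : sphere (0 : E n) 1, cassinianQuotient x y p := by
  rw [cassinian, frontier_ball _ one_ne_zero]
  rfl

theorem cassinian_ball_inversion_bounds {c : E n} {R : ℝ} (hc : 1 < ‖c‖)
    (hR : R ^ 2 = ‖c‖ ^ 2 - 1) {x y : E n} (hx : x ∈ ball (0 : E n) 1)
    (hy : y ∈ ball (0 : E n) 1) :
    (‖c‖ - 1) / (‖c‖ + 1) * cassinian (ball (0 : E n) 1) x y ≤
        cassinian (ball (0 : E n) 1) (inversion c R x) (inversion c R y) ∧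
      cassinian (ball (0 : E n) 1) (inversion c R x) (inversion c R y) ≤
        (‖c‖ + 1) / (‖c‖ - 1) * cassinian (ball (0 : E n) 1) x y := by
  rw [mem_ball_zero_iff] at hx hy
  have hR₀ : R ≠ 0 := by rintro rfl; nlinarith
  have hne : ∀ z : E n, ‖z‖ ≤ 1 → z ≠ c := by rintro z hz rfl; linarith
  let σ : sphere (0 : E n) 1 ≃ sphere (0 : E n) 1 :=
    ((inversion_involutive c hR₀).toPerm _).subtypeEquiv fun p => by
      simp only [mem_sphere_zero_iff_norm, Function.Involutive.coe_toPerm]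
      refine ⟨norm_inversion_of_norm_eq_one hR, fun h => ?_⟩
      rw [← inversion_inversion c hR₀ p]
      exact norm_inversion_of_norm_eq_one hR h
  have hreindex : cassinian (ball (0 : E n) 1) (inversion c R x) (inversion c R y) =
      ⨆ p : sphere (0 : E n) 1, dist (p : E n) c ^ 2 / R ^ 2 * cassinianQuotient x y p := by
    rw [cassinian_ball_eq_iSup_sphere, ← σ.iSup_comp]
    exact iSup_congr fun p => cassinianQuotient_inversion hR₀ (hne x hx.le) (hne y hy.le)
      (hne p (norm_eq_of_mem_sphere p).le)
  rw [hreindex, cassinian_ball_eq_iSup_sphere]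
  exact mul_iSup_le_iSup_mul_and_le (fun p => cassinianQuotient_nonneg _ _ _)
    ⟨_, forall_mem_range.2 fun p => cassinianQuotient_le hx hy (norm_eq_of_mem_sphere p)⟩
    (div_nonneg (by linarith) (by linarith))
    fun p => dist_sq_div_sq_mem_Icc hc hR (norm_eq_of_mem_sphere p)

end Cassinian

theorem cassinian_mobius_distortion_general (n : ℕ) (f : E n → E n)
    (hf : IsMobiusOfBall f)
    (x y : E n) (hx : x ∈ ball (0 : E n) 1) (hy : y ∈ ball (0 : E n) 1) :
    (1 - ‖f 0‖) / (1 + ‖f 0‖) * cassinian (ball (0 : E n) 1) x y ≤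
        cassinian (ball (0 : E n) 1) (f x) (f y) ∧
      cassinian (ball (0 : E n) 1) (f x) (f y) ≤
        (1 + ‖f 0‖) / (1 - ‖f 0‖) * cassinian (ball (0 : E n) 1) x y := by
  obtain ⟨T, hT | ⟨a, ha₀, ha₁, hfa⟩⟩ := hf
  · simp [hT, cassinian_ball_linearIsometryEquiv]
  set c : E n := (‖a‖ ^ 2)⁻¹ • a
  set R := √(1 - ‖a‖ ^ 2) / ‖a‖
  have ha : 0 < ‖a‖ := norm_pos_iff.2 ha₀
  have hc : ‖c‖ = ‖a‖⁻¹ := norm_inv_norm_sq_smul a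
  have hc₁ : 1 < ‖c‖ := hc ▸ (one_lt_inv₀ ha).2 ha₁
  have hR : R ^ 2 = ‖c‖ ^ 2 - 1 := by
    rw [div_pow, Real.sq_sqrt (by nlinarith), hc]
    field_simp
  have hf₀ : ‖f 0‖ = ‖a‖ := by rw [hfa, map_zero, norm_inversion_zero hR, hc, inv_inv]
  have hTx : T x ∈ ball (0 : E n) 1 := by simpa using hx
  have hTy : T y ∈ ball (0 : E n) 1 := by simpa using hy
  have hlo : (1 - ‖a‖) / (1 + ‖a‖) = (‖c‖ - 1) / (‖c‖ + 1) := by rw [hc]; field_simp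
  have hhi : (1 + ‖a‖) / (1 - ‖a‖) = (‖c‖ + 1) / (‖c‖ - 1) := by rw [hc]; field_simp
  rw [hf₀, hlo, hhi, hfa, hfa, ← cassinian_ball_linearIsometryEquiv T x y]
  exact cassinian_ball_inversion_bounds hc₁ hR hTx hTy

theorem cassinian_mobius_distortion (n : ℕ) (hn : 2 ≤ n) (f : E n → E n)
    (hf : IsMobiusOfBall f) (hfb : f '' ball (0 : E n) 1 = ball (0 : E n) 1)
    (x y : E n) (hx : x ∈ ball (0 : E n) 1) (hy : y ∈ ball (0 : E n) 1) :
    (1 - ‖f 0‖) / (1 + ‖f 0‖) * cassinian (ball (0 : E n) 1) x y ≤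
        cassinian (ball (0 : E n) 1) (f x) (f y) ∧
      cassinian (ball (0 : E n) 1) (f x) (f y) ≤
        (1 + ‖f 0‖) / (1 - ‖f 0‖) * cassinian (ball (0 : E n) 1) x y :=
  cassinian_mobius_distortion_general n f hf x y hx hy
end

section
/- For the punctured space D = R^n \ {0}, the inner Cassinian metric equals the Cassinian metric: c̃_D(x,y) = c_D(x,y) = |x-y|/(|x||y|) for all x, y ∈ D. -/
open Metric Set

/-- The Cassinian length of a curve `g : [0,1] → ℝⁿ`: the supremum over partitions
of `[0,1]` of the sums of Cassinian distances of consecutive points. -/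
noncomputable def cassinianLength {n : ℕ} (D : Set (E n)) (g : ℝ → E n) : ENNReal :=
  ⨆ p : ℕ × {u : ℕ → ℝ // Monotone u ∧ ∀ i, u i ∈ Icc (0 : ℝ) 1},
    ∑ i ∈ Finset.range p.1, ENNReal.ofReal (cassinian D (g (p.2.1 i)) (g (p.2.1 (i + 1))))

/-- The inner Cassinian metric: the infimum of Cassinian lengths over curves in `D`
joining `x` to `y`. -/
noncomputable def innerCassinian {n : ℕ} (D : Set (E n)) (x y : E n) : ENNReal :=
  ⨅ g : {g : ℝ → E n // ContinuousOn g (Icc (0 : ℝ) 1) ∧ g 0 = x ∧ g 1 = y ∧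
      g '' Icc (0 : ℝ) 1 ⊆ D},
    cassinianLength D g.1

/-!
Inversion `z ↦ z / ‖z‖²` in the unit sphere turns the Cassinian distance of the punctured space
into Euclidean distance: `|x - y| / (|x| |y|) = |x' - y'|`. Hence the Cassinian length of a curve
is the Euclidean length (variation) of its inverted image, which is at least `|x' - y'|`. Conversely,
the segment from `x'` to `y'`, bent by `δ t (1 - t)` in a unit direction orthogonal to `x'` and on
the side of `y'`, misses the origin and has length at most `|x' - y'| + δ`.
-/

open EuclideanGeometry RealInnerProductSpace Module
open scoped NNReal

section NormedSpace

variable {F : Type*} [NormedAddCommGroup F] [NormedSpace ℝ F]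

theorem frontier_compl_singleton [Nontrivial F] (c : F) : frontier ({c}ᶜ : Set F) = {c} := by
  rw [frontier_compl, frontier, closure_singleton, interior_singleton, sdiff_empty]

def bentSegment (a b w : F) (δ t : ℝ) : F :=
  a + t • (b - a) + (δ * (t * (1 - t))) • w

theorem lipschitzOnWith_bentSegment (a b w : F) (δ : ℝ≥0) :
    LipschitzOnWith (‖b - a‖₊ + δ * ‖w‖₊) (bentSegment a b w δ) (Icc 0 1) := by
  refine LipschitzOnWith.of_dist_le_mul fun s hs t ht => ?_
  have hdiff : bentSegment a b w δ s - bentSegment a b w δ t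
      = (s - t) • (b - a) + ((δ : ℝ) * ((s - t) * (1 - s - t))) • w := by
    simp only [bentSegment]
    module
  have hbend : |1 - s - t| ≤ 1 :=
    abs_le.mpr ⟨by linarith [hs.2, ht.2], by linarith [hs.1, ht.1]⟩
  rw [dist_eq_norm, hdiff, Real.dist_eq]
  push_cast
  calc ‖(s - t) • (b - a) + ((δ : ℝ) * ((s - t) * (1 - s - t))) • w‖
      ≤ |s - t| * ‖b - a‖ + δ * (|s - t| * |1 - s - t|) * ‖w‖ := by
        grw [norm_add_le, norm_smul, norm_smul, Real.norm_eq_abs, Real.norm_eq_abs, abs_mul,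
          abs_mul, NNReal.abs_eq]
    _ ≤ (‖b - a‖ + δ * ‖w‖) * |s - t| := by
        have hslack := mul_le_mul_of_nonneg_left hbend (abs_nonneg (s - t))
        nlinarith [mul_nonneg (mul_nonneg δ.coe_nonneg (norm_nonneg w)) (sub_nonneg.2 hslack)]

end NormedSpace

section InnerProductSpace

variable {F : Type*} [NormedAddCommGroup F] [InnerProductSpace ℝ F]

theorem inversion_zero_one_ne_zero {p : F} (hp : p ≠ 0) : inversion 0 1 p ≠ 0 :=
  (inversion_eq_center one_ne_zero).not.mpr hp

theorem dist_inversion_zero_one {p q : F} (hp : p ≠ 0) (hq : q ≠ 0) :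
    dist (inversion 0 1 p) (inversion 0 1 q) = dist p q / (‖p‖ * ‖q‖) := by
  rw [dist_inversion_inversion hp hq, one_pow, dist_zero_right, dist_zero_right,
    one_div_mul_eq_div]

theorem exists_norm_eq_one_inner_eq_zero_inner_nonneg [FiniteDimensional ℝ F]
    (hF : 2 ≤ finrank ℝ F) (a b : F) : ∃ w : F, ‖w‖ = 1 ∧ ⟪a, w⟫ = 0 ∧ 0 ≤ ⟪b, w⟫ := by
  have hperp : (ℝ ∙ a)ᗮ ≠ ⊥ := by
    intro hbot
    have hsum := Submodule.finrank_add_finrank_orthogonal (ℝ ∙ a)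
    have hline : finrank ℝ (ℝ ∙ a) ≤ 1 := (finrank_span_le_card {a}).trans (by simp)
    rw [hbot, finrank_bot] at hsum
    omega
  obtain ⟨v, hv, hv0⟩ := Submodule.exists_mem_ne_zero_of_ne_bot hperp
  have hav : ⟪a, ‖v‖⁻¹ • v⟫ = 0 := by
    rw [real_inner_smul_right, Submodule.mem_orthogonal_singleton_iff_inner_right.mp hv, mul_zero]
  rcases le_total 0 ⟪b, ‖v‖⁻¹ • v⟫ with hb | hb
  · exact ⟨‖v‖⁻¹ • v, norm_smul_inv_norm hv0, hav, hb⟩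
  · refine ⟨-(‖v‖⁻¹ • v), by rw [norm_neg]; exact norm_smul_inv_norm hv0, ?_, ?_⟩ <;>
      simp only [inner_neg_right, hav, neg_zero, Left.nonneg_neg_iff, hb]

theorem bentSegment_ne_zero {a b w : F} (ha : a ≠ 0) (hb : b ≠ 0) (hw : ‖w‖ = 1)
    (haw : ⟪a, w⟫ = 0) (hbw : 0 ≤ ⟪b, w⟫) {δ : ℝ} (hδ : 0 < δ) {t : ℝ} (ht : t ∈ Icc 0 1) :
    bentSegment a b w δ t ≠ 0 := by
  rcases ht.1.eq_or_lt with rfl | ht0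
  · simpa [bentSegment] using ha
  rcases ht.2.eq_or_lt with rfl | ht1
  · simpa [bentSegment] using hb
  have hinner : ⟪bentSegment a b w δ t, w⟫ = t * ⟪b, w⟫ + δ * (t * (1 - t)) := by
    simp only [bentSegment, inner_add_left, inner_sub_left, real_inner_smul_left, haw,
      real_inner_self_eq_norm_sq, hw]
    ring
  intro h0
  rw [h0, inner_zero_left] at hinner
  nlinarith [mul_pos hδ (mul_pos ht0 (sub_pos.mpr ht1)), mul_nonneg ht0.le hbw]

theorem exists_lipschitzOnWith_path_ne_zero [FiniteDimensional ℝ F] (hF : 2 ≤ finrank ℝ F)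
    {a b : F} (ha : a ≠ 0) (hb : b ≠ 0) {δ : ℝ≥0} (hδ : 0 < δ) :
    ∃ h : ℝ → F, Continuous h ∧ h 0 = a ∧ h 1 = b ∧ (∀ t ∈ Icc (0 : ℝ) 1, h t ≠ 0) ∧
      LipschitzOnWith (nndist a b + δ) h (Icc 0 1) := by
  obtain ⟨w, hw, haw, hbw⟩ := exists_norm_eq_one_inner_eq_zero_inner_nonneg hF a b
  refine ⟨bentSegment a b w δ, by unfold bentSegment; fun_prop, by simp [bentSegment],
    by simp [bentSegment], fun t ht => bentSegment_ne_zero ha hb hw haw hbw hδ ht, ?_⟩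
  have hw' : ‖w‖₊ = 1 := NNReal.eq hw
  simpa [hw', nndist_comm a b, nndist_eq_nnnorm] using lipschitzOnWith_bentSegment a b w δ

end InnerProductSpace

section Cassinian

variable {n : ℕ} [Nontrivial (E n)]

theorem cassinian_compl_zero (p q : E n) :
    cassinian ({0}ᶜ : Set (E n)) p q = dist p q / (‖p‖ * ‖q‖) := by
  unfold cassinian
  rw [frontier_compl_singleton, ciSup_unique]
  simp

theorem cassinian_compl_zero_inversion {p q : E n} (hp : p ≠ 0) (hq : q ≠ 0) :
    cassinian ({0}ᶜ : Set (E n)) (inversion 0 1 p) (inversion 0 1 q) = dist p q := by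
  rw [cassinian_compl_zero, ← dist_inversion_zero_one (inversion_zero_one_ne_zero hp)
    (inversion_zero_one_ne_zero hq), inversion_inversion _ one_ne_zero,
    inversion_inversion _ one_ne_zero]

theorem cassinianLength_compl_zero_inversion {h : ℝ → E n} (hh : ∀ t ∈ Icc (0 : ℝ) 1, h t ≠ 0) :
    cassinianLength ({0}ᶜ : Set (E n)) (fun t => inversion 0 1 (h t)) =
      eVariationOn h (Icc 0 1) := by
  unfold cassinianLength eVariationOn
  refine iSup_congr fun p => Finset.sum_congr rfl fun i _ => ?_
  rw [cassinian_compl_zero_inversion (hh _ (p.2.2.2 i)) (hh _ (p.2.2.2 (i + 1))), edist_comm,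
    edist_dist]

theorem edist_inversion_le_innerCassinian_compl_zero (x y : E n) :
    edist (inversion 0 1 x) (inversion 0 1 y) ≤ innerCassinian ({0}ᶜ : Set (E n)) x y := by
  refine le_iInf fun ⟨g, _, hg0, hg1, hgD⟩ => ?_
  have hlength := cassinianLength_compl_zero_inversion (h := fun t => inversion 0 1 (g t))
    fun t ht => inversion_zero_one_ne_zero (hgD ⟨t, ht, rfl⟩)
  simp only [inversion_inversion _ one_ne_zero] at hlength
  rw [hlength, ← hg0, ← hg1]
  exact eVariationOn.edist_le _ (left_mem_Icc.2 zero_le_one) (right_mem_Icc.2 zero_le_one)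

theorem innerCassinian_compl_zero_le_eVariationOn {x y : E n} {h : ℝ → E n}
    (hc : ContinuousOn h (Icc 0 1)) (h0 : h 0 = inversion 0 1 x) (h1 : h 1 = inversion 0 1 y)
    (hh : ∀ t ∈ Icc (0 : ℝ) 1, h t ≠ 0) :
    innerCassinian ({0}ᶜ : Set (E n)) x y ≤ eVariationOn h (Icc 0 1) := by
  have hg : ContinuousOn (fun t => inversion (0 : E n) 1 (h t)) (Icc 0 1) :=
    ContinuousOn.inversion (c := fun _ => 0) (R := fun _ => 1) continuousOn_const
      continuousOn_const hc hh
  rw [← cassinianLength_compl_zero_inversion hh]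
  refine iInf_le_of_le ⟨fun t => inversion 0 1 (h t), hg, ?_, ?_, ?_⟩ le_rfl
  · simp only [h0, inversion_inversion _ one_ne_zero]
  · simp only [h1, inversion_inversion _ one_ne_zero]
  · rintro _ ⟨t, ht, rfl⟩
    exact inversion_zero_one_ne_zero (hh t ht)

theorem innerCassinian_compl_zero_le_edist_inversion (hn : 2 ≤ n) {x y : E n} (hx : x ≠ 0)
    (hy : y ≠ 0) :
    innerCassinian ({0}ᶜ : Set (E n)) x y ≤ edist (inversion 0 1 x) (inversion 0 1 y) := by
  refine ENNReal.le_of_forall_pos_le_add fun δ hδ _ => ?_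
  obtain ⟨h, hc, h0, h1, hh, hlip⟩ := exists_lipschitzOnWith_path_ne_zero
    (by rwa [finrank_euclideanSpace_fin]) (inversion_zero_one_ne_zero hx)
    (inversion_zero_one_ne_zero hy) (by exact_mod_cast hδ)
  calc innerCassinian ({0}ᶜ : Set (E n)) x y ≤ eVariationOn (h ∘ id) (Icc 0 1) :=
        innerCassinian_compl_zero_le_eVariationOn hc.continuousOn h0 h1 hh
    _ ≤ (nndist (inversion 0 1 x) (inversion 0 1 y) + δ) * eVariationOn id (Icc (0 : ℝ) 1) :=
        hlip.comp_eVariationOn_le (mapsTo_id _)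
    _ = edist (inversion 0 1 x) (inversion 0 1 y) + δ := by
        rw [eVariationOn_id_Icc, sub_zero, ENNReal.ofReal_one, mul_one, edist_nndist]

end Cassinian

theorem innerCassinian_punctured (n : ℕ) (hn : 2 ≤ n) (x y : E n)
    (hx : x ∈ ({0}ᶜ : Set (E n))) (hy : y ∈ ({0}ᶜ : Set (E n))) :
    innerCassinian ({0}ᶜ : Set (E n)) x y = ENNReal.ofReal (dist x y / (‖x‖ * ‖y‖)) ∧
      cassinian ({0}ᶜ : Set (E n)) x y = dist x y / (‖x‖ * ‖y‖) := by
  have : Nontrivial (E n) := nontrivial_of_ne x 0 hx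
  refine ⟨le_antisymm ?_ ?_, cassinian_compl_zero x y⟩ <;>
    rw [← dist_inversion_zero_one hx hy, ← edist_dist]
  · exact innerCassinian_compl_zero_le_edist_inversion hn hx hy
  · exact edist_inversion_le_innerCassinian_compl_zero x y
end

section
/- For all x, y in the unit ball B^n, tan(v(x,y)/2) ≤ c(x,y), where v is the visual angle metric and c the Cassinian metric of B^n. -/
open Metric Set

/-- The visual angle metric: the supremum of the angles subtended by `x, y`
at boundary points of `D`. -/
noncomputable def visualAngle {n : ℕ} (D : Set (E n)) (x y : E n) : ℝ :=
  ⨆ z : frontier D, EuclideanGeometry.angle x (z : E n) y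

/-!
Fix a boundary point `z` and put `a = |x - z|`, `b = |z - y|`, `θ = ∠ x z y`. The vectors
`x - z`, `y - z` lie in the unit ball centred at `-z`; comparing them through the reflection in
the line `ℝ z` gives `a b ≤ 2 (1 + cos θ) = 4 cos² (θ / 2)`. With the law of cosines,
`|x - y|² ≥ 2 a b (1 - cos θ) = 4 a b sin² (θ / 2)`, so `tan (θ / 2) ≤ |x - y| / (a b)` and in
particular `θ / 2 < π / 2`. Hence `v / 2 ≤ arctan c` after taking suprema, and `tan` is monotone.
-/

open Real EuclideanGeometry RealInnerProductSpace

section InnerProductSpace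

variable {V : Type*} [NormedAddCommGroup V] [InnerProductSpace ℝ V]

/-- `u ↦ 2 ⟪u, w⟫ w - u` is the reflection in the line `ℝ w`, hence an isometry. -/
theorem two_mul_inner_mul_inner_le {w : V} (hw : ‖w‖ = 1) (u v : V) :
    2 * ⟪u, w⟫ * ⟪v, w⟫ ≤ ‖u‖ * ‖v‖ + ⟪u, v⟫ := by
  have hnorm : ‖(2 * ⟪u, w⟫) • w - u‖ = ‖u‖ := by
    rw [← sq_eq_sq₀ (norm_nonneg _) (norm_nonneg _), norm_sub_sq_real, norm_smul,
      real_inner_smul_left, Real.norm_eq_abs, mul_pow, sq_abs, hw, real_inner_comm]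
    ring
  have h := real_inner_le_norm ((2 * ⟪u, w⟫) • w - u) v
  rw [hnorm, inner_sub_left, real_inner_smul_left, real_inner_comm v w] at h
  linarith

theorem norm_sub_sq_le_neg_two_inner {x z : V} (hx : ‖x‖ ≤ 1) (hz : ‖z‖ = 1) :
    ‖x - z‖ ^ 2 ≤ -(2 * ⟪x - z, z⟫) := by
  have h := norm_add_sq_real (x - z) z
  rw [sub_add_cancel, hz] at h
  nlinarith [norm_nonneg x]

theorem dist_mul_dist_le_two_mul_one_add_cos_angle {x y z : V} (hx : ‖x‖ ≤ 1) (hy : ‖y‖ ≤ 1)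
    (hz : ‖z‖ = 1) : dist x z * dist z y ≤ 2 * (1 + cos (∠ x z y)) := by
  rw [dist_eq_norm, dist_eq_norm']
  have hcos : cos (∠ x z y) * (‖x - z‖ * ‖y - z‖) = ⟪x - z, y - z⟫ :=
    InnerProductGeometry.cos_angle_mul_norm_mul_norm _ _
  have hxz := norm_sub_sq_le_neg_two_inner hx hz
  have hyz := norm_sub_sq_le_neg_two_inner hy hz
  have hprod : (‖x - z‖ * ‖y - z‖) ^ 2 ≤ 4 * ⟪x - z, z⟫ * ⟪y - z, z⟫ := by
    nlinarith [mul_le_mul hxz hyz (sq_nonneg _) (le_trans (sq_nonneg _) hxz)]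
  have hrefl := two_mul_inner_mul_inner_le hz (x - z) (y - z)
  nlinarith [neg_one_le_cos (∠ x z y), mul_nonneg (norm_nonneg (x - z)) (norm_nonneg (y - z))]

end InnerProductSpace

section Triangle

variable {V P : Type*} [NormedAddCommGroup V] [InnerProductSpace ℝ V] [MetricSpace P]
  [NormedAddTorsor V P]

theorem half_angle_le_arctan_dist_div {x y z : P} (hx : x ≠ z) (hy : y ≠ z)
    (h : dist x z * dist z y ≤ 2 * (1 + cos (∠ x z y))) :
    ∠ x z y / 2 ≤ arctan (dist x y / (dist x z * dist z y)) := by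
  obtain ⟨θ, hθ⟩ : ∃ θ, ∠ x z y = 2 * θ := ⟨∠ x z y / 2, by ring⟩
  have hlaw := law_cos x z y
  rw [dist_comm y z, hθ] at hlaw
  rw [hθ, cos_two_mul] at h
  rw [hθ, mul_div_cancel_left₀ _ two_ne_zero]
  have hθ0 : 0 ≤ θ := by linarith [angle_nonneg x z y]
  have hθπ : θ ≤ π / 2 := by linarith [angle_le_pi x z y]
  set a := dist x z
  set b := dist z y
  set d := dist x y
  have hab : 0 < a * b := mul_pos (dist_pos.2 hx) (dist_pos.2 hy.symm)
  have hcos : 0 < cos θ := by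
    refine (cos_nonneg_of_mem_Icc ⟨by linarith [pi_pos], hθπ⟩).lt_of_ne' fun h0 => ?_
    rw [h0] at h; linarith
  have hsin : 0 ≤ sin θ := sin_nonneg_of_nonneg_of_le_pi hθ0 (by linarith)
  have hd : 4 * (a * b) * sin θ ^ 2 ≤ d ^ 2 := by
    rw [cos_two_mul, cos_sq'] at hlaw; nlinarith [sq_nonneg (a - b)]
  have hsq : (sin θ * (a * b)) ^ 2 ≤ (d * cos θ) ^ 2 := by
    nlinarith [mul_le_mul_of_nonneg_right hd (sq_nonneg (cos θ)),
      mul_le_mul_of_nonneg_left h (mul_nonneg hab.le (sq_nonneg (sin θ)))]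
  have hmul : sin θ * (a * b) ≤ d * cos θ :=
    (pow_le_pow_iff_left₀ (by positivity) (by positivity) two_ne_zero).1 hsq
  rw [← arctan_tan (by linarith [pi_pos]) (hθπ.lt_of_ne fun h => by simp [h] at hcos)]
  refine arctan_strictMono.monotone ?_
  rw [tan_eq_sin_div_cos, div_le_div_iff₀ hcos hab]
  exact hmul

end Triangle

theorem dist_div_dist_mul_dist_le {V : Type*} [SeminormedAddCommGroup V] {x y p : V}
    (hx : ‖x‖ < 1) (hy : ‖y‖ < 1) (hp : ‖p‖ = 1) :
    dist x y / (dist x p * dist p y) ≤ dist x y / ((1 - ‖x‖) * (1 - ‖y‖)) := by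
  have hxp : 1 - ‖x‖ ≤ dist x p := by
    rw [← hp, dist_comm, dist_eq_norm]; exact norm_sub_norm_le p x
  have hyp : 1 - ‖y‖ ≤ dist p y := by
    rw [← hp, dist_eq_norm]; exact norm_sub_norm_le p y
  gcongr

theorem tan_visualAngle_le_cassinian_general (n : ℕ) (x y : E n)
    (hx : x ∈ ball (0 : E n) 1) (hy : y ∈ ball (0 : E n) 1) :
    Real.tan (visualAngle (ball (0 : E n) 1) x y / 2) ≤
      cassinian (ball (0 : E n) 1) x y := by
  rw [mem_ball_zero_iff] at hx hy
  have hsphere (p : frontier (ball (0 : E n) 1)) : ‖(p : E n)‖ = 1 := by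
    simpa [frontier_ball] using p.2
  have hbdd : BddAbove (range fun p : frontier (ball (0 : E n) 1) =>
      dist x y / (dist x (p : E n) * dist (p : E n) y)) :=
    ⟨_, forall_mem_range.2 fun p => dist_div_dist_mul_dist_le hx hy (hsphere p)⟩
  set c := cassinian (ball (0 : E n) 1) x y
  have hc : 0 ≤ c := Real.iSup_nonneg fun p => by positivity
  have hv : visualAngle (ball (0 : E n) 1) x y / 2 ≤ arctan c := by
    rw [div_le_iff₀ two_pos]
    refine Real.iSup_le (fun p => ?_) (by positivity)
    have hxp : x ≠ p := fun h => (hsphere p ▸ h ▸ hx).false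
    have hyp : y ≠ p := fun h => (hsphere p ▸ h ▸ hy).false
    have hangle := half_angle_le_arctan_dist_div hxp hyp
      (dist_mul_dist_le_two_mul_one_add_cos_angle hx.le hy.le (hsphere p))
    have hpc : dist x y / (dist x p * dist (p : E n) y) ≤ c := le_ciSup hbdd p
    linarith [arctan_strictMono.monotone hpc]
  have hv0 : 0 ≤ visualAngle (ball (0 : E n) 1) x y :=
    Real.iSup_nonneg fun _ => angle_nonneg _ _ _
  calc tan (visualAngle (ball (0 : E n) 1) x y / 2) ≤ tan (arctan c) :=
        strictMonoOn_tan.monotoneOn ⟨by linarith [pi_pos], hv.trans_lt (arctan_lt_pi_div_two c)⟩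
          ⟨neg_pi_div_two_lt_arctan c, arctan_lt_pi_div_two c⟩ hv
    _ = c := tan_arctan c

theorem tan_visualAngle_le_cassinian (n : ℕ) (hn : 2 ≤ n) (x y : E n)
    (hx : x ∈ ball (0 : E n) 1) (hy : y ∈ ball (0 : E n) 1) :
    Real.tan (visualAngle (ball (0 : E n) 1) x y / 2) ≤
      cassinian (ball (0 : E n) 1) x y :=
  tan_visualAngle_le_cassinian_general n x y hx hy
end

section
/- For all x, y in the unit disk B² with max(|x|,|y|) ≤ λ < 1, c(x,y) ≤ (2(3+λ²))/(3(1-λ²)(1-λ)²) · v(x,y), where c is the Cassinian metric and v the visual angle metric of B². -/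
open Metric Set

/-!
For `p` on the unit circle, `|x - p|, |p - y| ≥ 1 - λ`, so `c(x, y) ≤ |x - y| / (1 - λ)²`.
Conversely, the perpendicular bisector of `x ≠ y` meets the unit circle at some `z`, and since
`|x - z| = |y - z| ≤ 2`, the chord `|x - y|` is at most `2 ∠xzy ≤ 2 v(x, y)`. The constant
`2 / (1 - λ)²` obtained this way is at most the one in the statement, because
`3 (1 - λ²) ≤ 3 + λ²`.
-/

open EuclideanGeometry

section Chord

variable {V P : Type*} [NormedAddCommGroup V] [InnerProductSpace ℝ V] [MetricSpace P]
  [NormedAddTorsor V P]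

theorem dist_le_dist_mul_angle_of_dist_eq {x y z : P} (h : dist x z = dist y z) :
    dist x y ≤ dist x z * ∠ x z y := by
  have hcos := law_cos x z y
  rw [← h] at hcos
  have hchord_sq : dist x y ^ 2 ≤ (dist x z * ∠ x z y) ^ 2 := by
    nlinarith [Real.one_sub_sq_div_two_le_cos (x := ∠ x z y), mul_self_nonneg (dist x z)]
  exact (pow_le_pow_iff_left₀ dist_nonneg
    (mul_nonneg dist_nonneg (angle_nonneg x z y)) two_ne_zero).mp hchord_sq

end Chord

theorem exists_mem_sphere_dist_eq_dist {F : Type*} [NormedAddCommGroup F]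
    [InnerProductSpace ℝ F] (hF : 1 < Module.rank ℝ F) {x y : F} (hx : ‖x‖ < 1) (hy : ‖y‖ < 1)
    (hxy : x ≠ y) : ∃ z ∈ sphere (0 : F) 1, dist x z = dist y z := by
  -- `g` changes sign between the unit vectors `±(x - y) / ‖x - y‖` of the connected sphere.
  set g : F → ℝ := fun z => dist x z ^ 2 - dist y z ^ 2
  have hg : ∀ z, g z = ‖x‖ ^ 2 - ‖y‖ ^ 2 - 2 * inner ℝ (x - y) z := fun z => by
    simp only [g, dist_eq_norm, norm_sub_sq_real, inner_sub_left]
    ring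
  set d := ‖x - y‖
  have hd : 0 < d := norm_pos_iff.mpr (sub_ne_zero.mpr hxy)
  set u : F := d⁻¹ • (x - y)
  have hu : u ∈ sphere (0 : F) 1 := by
    rw [mem_sphere_zero_iff_norm, norm_smul, norm_inv, norm_norm, inv_mul_cancel₀ hd.ne']
  have hinner : inner ℝ (x - y) u = d := by
    rw [real_inner_smul_right, real_inner_self_eq_norm_sq]
    change d⁻¹ * d ^ 2 = d
    field_simp
  have hdiff : |‖x‖ ^ 2 - ‖y‖ ^ 2| < 2 * d := by
    rw [sq_sub_sq, abs_mul, abs_of_nonneg (by positivity : 0 ≤ ‖x‖ + ‖y‖)]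
    calc (‖x‖ + ‖y‖) * |‖x‖ - ‖y‖| ≤ (‖x‖ + ‖y‖) * d := by
          gcongr; exact abs_norm_sub_norm_le x y
      _ < 2 * d := by gcongr; linarith
  have hgu : g u ≤ 0 := by
    rw [hg, hinner]; linarith [le_abs_self (‖x‖ ^ 2 - ‖y‖ ^ 2)]
  have hgnu : 0 ≤ g (-u) := by
    rw [hg, inner_neg_right, hinner]; linarith [neg_abs_le (‖x‖ ^ 2 - ‖y‖ ^ 2)]
  have hnu : -u ∈ sphere (0 : F) 1 := by simpa using hu
  obtain ⟨z, hz, hgz⟩ := (isConnected_sphere hF 0 zero_le_one).isPreconnected.intermediate_value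
    hu hnu (by fun_prop : ContinuousOn g _) ⟨hgu, hgnu⟩
  refine ⟨z, hz, (sq_eq_sq₀ dist_nonneg dist_nonneg).mp ?_⟩
  simpa only [g, sub_eq_zero] using hgz

section UnitBall

variable {n : ℕ}

theorem cassinian_unitBall_le {lam : ℝ} (hlam : lam < 1) {x y : E n} (hx : ‖x‖ ≤ lam)
    (hy : ‖y‖ ≤ lam) : cassinian (ball (0 : E n) 1) x y ≤ dist x y / (1 - lam) ^ 2 := by
  have hsphere : ∀ w : E n, ‖w‖ ≤ lam → ∀ p ∈ frontier (ball (0 : E n) 1),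
      1 - lam ≤ dist w p := by
    intro w hw p hp
    have hp1 : ‖p‖ = 1 := mem_sphere_zero_iff_norm.mp (frontier_ball_subset_sphere hp)
    have := norm_sub_norm_le p w
    rw [dist_comm, dist_eq_norm]
    linarith
  refine Real.iSup_le (fun p => ?_) (by positivity)
  rw [sq, ← dist_comm y p]
  gcongr
  exacts [hsphere x hx p p.2, hsphere y hy p p.2]

theorem visualAngle_nonneg (D : Set (E n)) (x y : E n) : 0 ≤ visualAngle D x y :=
  Real.iSup_nonneg fun _ => angle_nonneg _ _ _

theorem angle_le_visualAngle {D : Set (E n)} {z : E n} (hz : z ∈ frontier D) (x y : E n) :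
    ∠ x z y ≤ visualAngle D x y :=
  le_ciSup (f := fun z : frontier D => ∠ x (z : E n) y)
    ⟨Real.pi, by rintro _ ⟨w, rfl⟩; exact angle_le_pi _ _ _⟩ ⟨z, hz⟩

theorem dist_le_two_mul_visualAngle_unitBall (hn : 2 ≤ n) {x y : E n} (hx : ‖x‖ < 1)
    (hy : ‖y‖ < 1) : dist x y ≤ 2 * visualAngle (ball (0 : E n) 1) x y := by
  rcases eq_or_ne x y with rfl | hxy
  · simpa using visualAngle_nonneg _ x x
  have hrank : 1 < Module.rank ℝ (E n) := by
    rw [← Module.finrank_eq_rank, finrank_euclideanSpace_fin]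
    exact_mod_cast hn
  obtain ⟨z, hz, hxz⟩ := exists_mem_sphere_dist_eq_dist hrank hx hy hxy
  have hz1 : ‖z‖ = 1 := mem_sphere_zero_iff_norm.mp hz
  have hzD : z ∈ frontier (ball (0 : E n) 1) := by rwa [frontier_ball 0 one_ne_zero]
  calc dist x y ≤ dist x z * ∠ x z y := dist_le_dist_mul_angle_of_dist_eq hxz
    _ ≤ 2 * visualAngle (ball (0 : E n) 1) x y := by
      gcongr
      · exact angle_nonneg _ _ _
      · linarith [dist_le_norm_add_norm x z]
      · exact angle_le_visualAngle hzD x y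

end UnitBall

theorem cassinian_le_visualAngle_general (lam : ℝ) (hlam : lam < 1) (x y : E 2)
    (hxy : max ‖x‖ ‖y‖ ≤ lam) :
    cassinian (ball (0 : E 2) 1) x y ≤
      2 * (3 + lam ^ 2) / (3 * (1 - lam ^ 2) * (1 - lam) ^ 2) *
        visualAngle (ball (0 : E 2) 1) x y := by
  obtain ⟨hx, hy⟩ := max_le_iff.mp hxy
  have hlam0 : 0 ≤ lam := (norm_nonneg x).trans hx
  have hconst : 2 / (1 - lam) ^ 2 ≤ 2 * (3 + lam ^ 2) / (3 * (1 - lam ^ 2) * (1 - lam) ^ 2) := by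
    have h1 : 0 < 1 - lam ^ 2 := by nlinarith
    have h2 : 0 < (1 - lam) ^ 2 := by nlinarith
    rw [div_le_div_iff₀ h2 (by positivity)]
    nlinarith [mul_nonneg (sq_nonneg lam) h2.le]
  calc cassinian (ball (0 : E 2) 1) x y ≤ dist x y / (1 - lam) ^ 2 :=
        cassinian_unitBall_le hlam hx hy
    _ ≤ 2 * visualAngle (ball (0 : E 2) 1) x y / (1 - lam) ^ 2 := by
        gcongr
        exact dist_le_two_mul_visualAngle_unitBall le_rfl (by linarith) (by linarith)
    _ = 2 / (1 - lam) ^ 2 * visualAngle (ball (0 : E 2) 1) x y := by ring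
    _ ≤ _ := by gcongr; exact visualAngle_nonneg _ x y

theorem cassinian_le_visualAngle (lam : ℝ) (hlam : lam < 1) (x y : E 2)
    (hx : x ∈ ball (0 : E 2) 1) (hy : y ∈ ball (0 : E 2) 1)
    (hxy : max ‖x‖ ‖y‖ ≤ lam) :
    cassinian (ball (0 : E 2) 1) x y ≤
      2 * (3 + lam ^ 2) / (3 * (1 - lam ^ 2) * (1 - lam) ^ 2) *
        visualAngle (ball (0 : E 2) 1) x y :=
  cassinian_le_visualAngle_general lam hlam x y hxy
end

section
/- In the unit ball B^n, c(0,x) = |x|/(1-|x|) for all x ∈ B^n, and more generally c(r e₁, s e₁) = (s-r)/((1-r)(1-s)) for 0 ≤ r < s < 1. -/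
open Metric Set

/-- The first standard basis vector of `ℝⁿ` (`n ≥ 2`). -/
noncomputable def e1 (n : ℕ) (hn : 2 ≤ n) : E n := EuclideanSpace.single ⟨0, by omega⟩ 1

/-! For every boundary point `p` of the unit ball the triangle inequality gives
`|x - p| ≥ 1 - |x|` and `|p - y| ≥ 1 - |y|`, so `c(x, y) ≤ |x - y| / ((1 - |x|)(1 - |y|))`.
When `x` and `y` lie on a common ray from the origin, the point where that ray meets the sphere
realises both bounds at once, so the bound is the value. `c(0, x)` is the case `r = 0` on the
ray through `x`. -/

lemma norm_e1 (n : ℕ) (hn : 2 ≤ n) : ‖e1 n hn‖ = 1 := by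
  simp [e1]

lemma cassinian_self {n : ℕ} (D : Set (E n)) (x : E n) : cassinian D x x = 0 := by
  simp [cassinian]

lemma dist_smul_smul_of_norm_eq_one {F : Type*} [SeminormedAddCommGroup F] [NormedSpace ℝ F]
    {u : F} (hu : ‖u‖ = 1) (r s : ℝ) : dist (r • u) (s • u) = |r - s| := by
  rw [dist_eq_norm, ← sub_smul, norm_smul, hu, mul_one, Real.norm_eq_abs]

lemma cassinian_unitBall_eq_of_dist_eq {n : ℕ} {x y p : E n} (hx : ‖x‖ < 1) (hy : ‖y‖ < 1)
    (hp : ‖p‖ = 1) (hxp : dist x p = 1 - ‖x‖) (hpy : dist p y = 1 - ‖y‖) :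
    cassinian (ball (0 : E n) 1) x y = dist x y / ((1 - ‖x‖) * (1 - ‖y‖)) := by
  rw [cassinian, frontier_ball (0 : E n) one_ne_zero]
  have hbound : ∀ q : sphere (0 : E n) 1,
      dist x y / (dist x (q : E n) * dist (q : E n) y) ≤
        dist x y / ((1 - ‖x‖) * (1 - ‖y‖)) := by
    rintro ⟨q, hq⟩
    rw [mem_sphere_zero_iff_norm] at hq
    have hxq : 1 - ‖x‖ ≤ dist x q := by
      simpa [hq, dist_comm x q, dist_eq_norm] using norm_sub_norm_le q x
    have hqy : 1 - ‖y‖ ≤ dist q y := by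
      simpa [hq, dist_eq_norm] using norm_sub_norm_le q y
    have : 0 < 1 - ‖x‖ := by linarith
    have : 0 < 1 - ‖y‖ := by linarith
    gcongr
  have hp' : p ∈ sphere (0 : E n) 1 := mem_sphere_zero_iff_norm.2 hp
  have : Nonempty (sphere (0 : E n) 1) := ⟨⟨p, hp'⟩⟩
  refine le_antisymm (ciSup_le hbound) ?_
  calc dist x y / ((1 - ‖x‖) * (1 - ‖y‖)) = dist x y / (dist x p * dist p y) := by
        rw [hxp, hpy]
    _ ≤ _ := le_ciSup ⟨_, forall_mem_range.2 hbound⟩ (⟨p, hp'⟩ : sphere (0 : E n) 1)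

lemma cassinian_unitBall_smul_smul {n : ℕ} {u : E n} (hu : ‖u‖ = 1) {r s : ℝ} (hr : 0 ≤ r)
    (hrs : r ≤ s) (hs : s < 1) :
    cassinian (ball (0 : E n) 1) (r • u) (s • u) = (s - r) / ((1 - r) * (1 - s)) := by
  have hnorm : ∀ t : ℝ, 0 ≤ t → ‖t • u‖ = t := fun t ht => by
    rw [norm_smul, hu, mul_one, Real.norm_of_nonneg ht]
  have hrn : ‖r • u‖ = r := hnorm r hr
  have hsn : ‖s • u‖ = s := hnorm s (hr.trans hrs)
  have hdist := dist_smul_smul_of_norm_eq_one hu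
  have hru : dist (r • u) u = 1 - ‖r • u‖ := by
    simpa [hrn, abs_of_nonpos (by linarith : r - 1 ≤ 0)] using hdist r 1
  have hus : dist u (s • u) = 1 - ‖s • u‖ := by
    simpa [hsn, abs_of_nonneg (by linarith : 0 ≤ 1 - s)] using hdist 1 s
  rw [cassinian_unitBall_eq_of_dist_eq (by linarith) (by linarith) hu hru hus, hdist, hrn, hsn,
    abs_of_nonpos (by linarith), neg_sub]

theorem cassinian_ball_formulas (n : ℕ) (hn : 2 ≤ n) :
    (∀ x ∈ ball (0 : E n) 1, cassinian (ball (0 : E n) 1) (0 : E n) x = ‖x‖ / (1 - ‖x‖)) ∧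
      ∀ r s : ℝ, 0 ≤ r → r < s → s < 1 →
        cassinian (ball (0 : E n) 1) (r • e1 n hn) (s • e1 n hn) =
          (s - r) / ((1 - r) * (1 - s)) := by
  refine ⟨fun x hx => ?_, fun r s hr hrs hs =>
    cassinian_unitBall_smul_smul (norm_e1 n hn) hr hrs.le hs⟩
  rw [mem_ball_zero_iff] at hx
  rcases eq_or_ne x 0 with rfl | hx0
  · simp [cassinian_self]
  · have h := cassinian_unitBall_smul_smul (norm_smul_inv_norm (𝕜 := ℝ) hx0) le_rfl
      (norm_nonneg x) hx
    simpa [smul_smul, hx0] using h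
end
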